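/- Let E be the directed graph with a single vertex v and countably infinitely many edges {e_n}_{n ∈ ℕ}, each with range and source v (so that the associated graph C*-algebra is the Cuntz algebra O_∞). Let {p_v, s_{e_n}} be a Cuntz–Krieger E-family in a C*-algebra B in which p_v is a unit for B, let c(e_n) = e (Euler's number) for all n, and let β > 0. Then there is no state on B satisfying the algebraic (σᶜ, β)-KMS condition. -/

import Mathlib

open scoped ComplexOrder

/-- A directed graph: vertex set `V`, edge set `E`, range and source maps. -/
structure DirectedGraph (V : Type*) (E : Type*) where
  r : E → V
  s : E → V

namespace DirectedGraph

variable {V E : Type*}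

/-- A finite path `μ = μ₁…μₙ` in a directed graph, recorded as the list of its
edges (in order) together with its range vertex; a path of length `0` is a single
vertex.  We require `s (μᵢ) = r (μᵢ₊₁)` and that the range vertex is `r (μ₁)`
when the path is nonempty. -/
structure Path (G : DirectedGraph V E) where
  rng : V
  edges : List E
  chain : edges.Chain' fun a b => G.s a = G.r b
  head_compat : ∀ e ∈ edges.head?, G.r e = rng

/-- The source `s(μ)` of a path. -/
def Path.src {G : DirectedGraph V E} (μ : G.Path) : V :=
  μ.edges.getLast?.elim μ.rng G.s

/-- The length `|μ|` of a path. -/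
def Path.length {G : DirectedGraph V E} (μ : G.Path) : ℕ := μ.edges.length

/-- The length-`0` path at a vertex. -/
def Path.ofVertex (G : DirectedGraph V E) (v : V) : G.Path :=
  ⟨v, [], by first | exact List.IsChain.nil | exact List.chain'_nil | trivial | constructor, by simp⟩

/-- `ρ.IsComp μ ν` says that `ρ` is the concatenation `μν` (so in particular
`s(μ) = r(ν)`). -/
def Path.IsComp {G : DirectedGraph V E} (ρ μ ν : G.Path) : Prop :=
  μ.src = ν.rng ∧ ρ.edges = μ.edges ++ ν.edges ∧ ρ.rng = μ.rng

/-- A vertex is singular if it receives no edges or infinitely many edges. -/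
def Singular (G : DirectedGraph V E) (v : V) : Prop :=
  {e | G.r e = v} = ∅ ∨ {e | G.r e = v}.Infinite

end DirectedGraph

/-- A Cuntz–Krieger `E`-family in a `*`-algebra `B`: mutually orthogonal
projections `P v` and partial isometries `S e` with mutually orthogonal ranges,
subject to the Cuntz–Krieger relations. -/
structure CKFamily {V E : Type*} (G : DirectedGraph V E) (B : Type*)
    [NonUnitalRing B] [StarRing B] [PartialOrder B] where
  P : V → B
  S : E → B
  P_sa : ∀ v, star (P v) = P v
  P_idem : ∀ v, P v * P v = P v
  P_orth : ∀ v w, v ≠ w → P v * P w = 0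
  S_partialIsometry : ∀ e, S e * star (S e) * S e = S e
  range_orth : ∀ e f, e ≠ f → S e * star (S e) * (S f * star (S f)) = 0
  ck1 : ∀ e, star (S e) * S e = P (G.s e)
  ck2 : ∀ e, S e * star (S e) ≤ P (G.r e)
  ck3 : ∀ v (h : {e | G.r e = v}.Finite), {e | G.r e = v}.Nonempty →
    P v = ∑ e ∈ h.toFinset, S e * star (S e)

namespace CKFamily

variable {V E B : Type*} {G : DirectedGraph V E}

section Algebraic

variable [NonUnitalRing B] [StarRing B] [PartialOrder B]

/-- `s_μ = s_{μ₁} ⋯ s_{μₙ}` for a path `μ`, with `s_v = p_v` for a vertex. -/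
def sP (F : CKFamily G B) (μ : G.Path) : B :=
  match μ.edges with
  | [] => F.P μ.rng
  | e :: es => es.foldl (fun b f => b * F.S f) (F.S e)

end Algebraic

section CStar

variable [NonUnitalNormedRing B] [StarRing B] [PartialOrder B]
  [NormedSpace ℂ B] [IsScalarTower ℂ B B] [SMulCommClass ℂ B B] [StarModule ℂ B]

/-- The submodule `F_k` = closed span of `{s_μ s_ν* : μ, ν ∈ Eᵏ, s(μ) = s(ν)}`. -/
def FkSub (F : CKFamily G B) (k : ℕ) : Submodule ℂ B :=
  (Submodule.span ℂ {x : B | ∃ μ ν : G.Path, μ.length = k ∧ ν.length = k ∧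
    μ.src = ν.src ∧ x = F.sP μ * star (F.sP ν)}).topologicalClosure

/-- The set `F_k`. -/
def Fk (F : CKFamily G B) (k : ℕ) : Set B := ↑(F.FkSub k)

/-- `ℰ_k` = closed span of `{s_μ s_ν* : μ, ν ∈ Eᵏ, s(μ) = s(ν) singular}`. -/
def Ek (F : CKFamily G B) (k : ℕ) : Set B :=
  ↑((Submodule.span ℂ {x : B | ∃ μ ν : G.Path, μ.length = k ∧ ν.length = k ∧
    μ.src = ν.src ∧ G.Singular μ.src ∧
    x = F.sP μ * star (F.sP ν)}).topologicalClosure)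

/-- `C_k = F_0 + ⋯ + F_k`. -/
def Ck (F : CKFamily G B) (k : ℕ) : Set B :=
  {x : B | ∃ f : Fin (k + 1) → B, (∀ i : Fin (k + 1), f i ∈ F.Fk i) ∧ x = ∑ i, f i}

/-- The submodule given by the closed span of
`{s_μ s_ν* : μ, ν ∈ E*, |μ| = |ν|, s(μ) = s(ν)}` (the "core"). -/
def coreSub (F : CKFamily G B) : Submodule ℂ B :=
  (Submodule.span ℂ {x : B | ∃ μ ν : G.Path, μ.length = ν.length ∧
    μ.src = ν.src ∧ x = F.sP μ * star (F.sP ν)}).topologicalClosure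

/-- A gauge action for a Cuntz–Krieger family: a point-norm continuous action of
the circle group by `*`-automorphisms fixing the `P v` and scaling the `S e`. -/
structure GaugeAction (F : CKFamily G B) where
  γ : Circle → B →L[ℂ] B
  map_one : γ 1 = ContinuousLinearMap.id ℂ B
  map_mul : ∀ z w, γ (z * w) = (γ z).comp (γ w)
  mul_hom : ∀ z (x y : B), γ z (x * y) = γ z x * γ z y
  star_hom : ∀ z (x : B), γ z (star x) = star (γ z x)
  cont : ∀ x : B, Continuous fun z => γ z x
  gauge_P : ∀ z v, γ z (F.P v) = F.P v
  gauge_S : ∀ z e, γ z (F.S e) = (z : ℂ) • F.S e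

/-- The fixed point algebra of a gauge action. -/
def GaugeAction.fixed {F : CKFamily G B} (γ : GaugeAction F) : Set B :=
  {a : B | ∀ z, γ.γ z a = a}

/-- `B` is generated, as a C*-algebra, by the family. -/
def Generates (F : CKFamily G B) : Prop :=
  closure (↑(NonUnitalStarAlgebra.adjoin ℂ
    (Set.range F.P ∪ Set.range F.S)) : Set B) = Set.univ

/-- The universality hypotheses: all vertex projections are nonzero, `B` is
generated by the family, and `B` carries a gauge action. -/
def IsUniversal (F : CKFamily G B) : Prop :=
  (∀ v, F.P v ≠ 0) ∧ F.Generates ∧ Nonempty (GaugeAction F)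

end CStar

end CKFamily

section States

variable {B : Type*} [NonUnitalNormedRing B] [StarRing B] [PartialOrder B]
  [NormedSpace ℂ B]

/-- A state: a positive continuous linear functional of norm one. -/
def IsStateOn (φ : B →L[ℂ] ℂ) : Prop :=
  ‖φ‖ = 1 ∧ ∀ x : B, 0 ≤ x → 0 ≤ φ x

end States

/-- `c(μ) = c(μ₁) ⋯ c(μₙ)`, with `c(v) = 1` for a vertex. -/
def cPath {V E : Type*} {G : DirectedGraph V E} (c : E → ℝ) (μ : G.Path) : ℝ :=
  (μ.edges.map c).prod

/-- The algebraic `(σᶜ, β)`-KMS condition, checked on spanning elements. -/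
def KMSCondition {V E B : Type*} {G : DirectedGraph V E}
    [NonUnitalNormedRing B] [StarRing B] [PartialOrder B] [NormedSpace ℂ B]
    (F : CKFamily G B) (c : E → ℝ) (β : ℝ) (φ : B →L[ℂ] ℂ) : Prop :=
  ∀ μ ν α η : G.Path, μ.src = ν.src → α.src = η.src →
    φ (F.sP μ * star (F.sP ν) * (F.sP α * star (F.sP η))) =
      Complex.ofReal (cPath c μ ^ (-β) * cPath c ν ^ β) *
        φ (F.sP α * star (F.sP η) * (F.sP μ * star (F.sP ν)))

/-- The graph with one vertex and countably many loops; its graph C*-algebra is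
the Cuntz algebra `O_∞`. -/
def cuntzInftyGraph : DirectedGraph Unit ℕ :=
  ⟨fun _ => (), fun _ => ()⟩

/-!
The KMS condition applied to `s_{e_n} p_v` and `p_v s_{e_n}*` gives
`φ(s_{e_n} s_{e_n}*) = e^{-β} φ(p_v)` for every `n`. The range projections of the `s_{e_n}`
are mutually orthogonal, so for every `N` their sum over `n < N` is a projection below the unit
`p_v`, and positivity gives `N e^{-β} φ(p_v) ≤ φ(p_v)`. Hence `φ(p_v) = 0`, and a positive
functional vanishing at the unit vanishes identically, contradicting `‖φ‖ = 1`.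
-/

namespace Complex

lemma eq_zero_of_forall_nonneg_ofReal_mul_add {A C : ℂ} (h : ∀ s : ℝ, 0 ≤ s * A + C) :
    A = 0 := by
  have hre : ∀ s : ℝ, 0 ≤ s * A.re + C.re := fun s => by simpa using (nonneg_iff.mp (h s)).1
  have him : ∀ s : ℝ, 0 = s * A.im + C.im := fun s => by simpa using (nonneg_iff.mp (h s)).2
  refine Complex.ext ?_ (by simp only [zero_im]; linarith [him 0, him 1])
  by_contra hA
  have := hre (-(C.re + 1) / A.re)
  rw [div_mul_cancel₀ _ hA] at this
  linarith

lemma eq_zero_of_forall_nonneg_star_mul_add {a a' C : ℂ}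
    (h : ∀ t : ℂ, 0 ≤ star t * a + t * a' + C) : a = 0 := by
  have hsum : a + a' = 0 := eq_zero_of_forall_nonneg_ofReal_mul_add fun s => by
    have := h s
    rwa [star_def, conj_ofReal, ← mul_add] at this
  have hdiff : I * (a' - a) = 0 := eq_zero_of_forall_nonneg_ofReal_mul_add fun s => by
    have := h (s * I)
    rw [star_def, map_mul, conj_ofReal, conj_I] at this
    convert this using 2
    ring
  have hdiff' : a' - a = 0 := (mul_eq_zero.mp hdiff).resolve_left I_ne_zero
  linear_combination hsum / 2 - hdiff' / 2

lemma eq_zero_of_nonneg_of_forall_nat_mul_le {z : ℂ} {r : ℝ} (hr : 0 < r) (hz : 0 ≤ z)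
    (h : ∀ N : ℕ, (N : ℂ) * (r * z) ≤ z) : z = 0 := by
  obtain ⟨x, hx, rfl⟩ := RCLike.nonneg_iff_exists_ofReal.mp hz
  obtain ⟨N, hN⟩ := exists_nat_gt r⁻¹
  rw [inv_lt_iff_one_lt_mul₀ hr] at hN
  have hle : (N : ℝ) * (r * x) ≤ x := real_le_real.mp (by push_cast; exact h N)
  have : x = 0 := by nlinarith
  simp [this]

end Complex

theorem IsStarProjection.sum {ι R : Type*} [NonUnitalNonAssocSemiring R] [StarRing R]
    {s : Finset ι} {f : ι → R} (hf : ∀ i ∈ s, IsStarProjection (f i))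
    (horth : (s : Set ι).Pairwise fun i j => f i * f j = 0) :
    IsStarProjection (∑ i ∈ s, f i) := by
  classical
  induction s using Finset.induction_on with
  | empty => simp [IsStarProjection.zero]
  | insert a s ha ih =>
    rw [Finset.sum_insert ha]
    refine (hf a (s.mem_insert_self a)).add
      (ih (fun i hi => hf i (Finset.mem_insert_of_mem hi))
        (horth.mono (by simp))) ?_
    rw [Finset.mul_sum]
    refine Finset.sum_eq_zero fun j hj => horth (by simp) (by simp [hj]) ?_
    rintro rfl
    exact ha hj

/-- `p` is a two-sided multiplicative identity, without `B` being given a `One` instance. -/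
def IsTwoSidedIdentity {B : Type*} [Mul B] (p : B) : Prop :=
  ∀ b, p * b = b ∧ b * p = b

namespace IsTwoSidedIdentity

variable {B : Type*} {p : B}

theorem isStarProjection [Mul B] [StarMul B] (hp : IsTwoSidedIdentity p) :
    IsStarProjection p where
  isIdempotentElem := (hp p).1
  isSelfAdjoint := calc
    star p = p * star p := ((hp _).1).symm
    _ = star (p * star p) := by rw [star_mul, star_star]
    _ = p := by rw [(hp _).1, star_star]

section Positive

variable [NonUnitalRing B] [StarRing B] [PartialOrder B] [StarOrderedRing B]
  {M : Type*} [FunLike M B ℂ] {φ : M}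

theorem apply_le_of_isStarProjection [AddMonoidHomClass M B ℂ]
    (hφ : ∀ x, 0 ≤ x → 0 ≤ φ x) (hp : IsTwoSidedIdentity p) {q : B}
    (hq : IsStarProjection q) : φ q ≤ φ p := by
  have hpq : 0 ≤ p - q := (hq.sub_of_mul_eq_left hp.isStarProjection (hp q).2).nonneg
  simpa [map_sub] using hφ _ hpq

/-- Expand `0 ≤ φ (star (t • p + b) * (t • p + b))` as a function of `t : ℂ`. -/
theorem apply_eq_zero_of_apply_eq_zero [Module ℂ B] [IsScalarTower ℂ B B] [SMulCommClass ℂ B B]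
    [StarModule ℂ B] [LinearMapClass M ℂ B ℂ] (hφ : ∀ x, 0 ≤ x → 0 ≤ φ x)
    (hp : IsTwoSidedIdentity p) (h0 : φ p = 0) (b : B) : φ b = 0 := by
  have hproj := hp.isStarProjection
  refine Complex.eq_zero_of_forall_nonneg_star_mul_add (a' := φ (star b))
    (C := φ (star b * b)) fun t => ?_
  have hexp : star (t • p + b) * (t • p + b)
      = (star t * t) • p + star t • b + t • star b + star b * b := by
    rw [star_add, star_smul, hproj.isSelfAdjoint.star_eq, add_mul, mul_add, mul_add,
      smul_mul_smul_comm, smul_mul_assoc, mul_smul_comm, hproj.isIdempotentElem.eq,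
      (hp b).1, (hp (star b)).2]
    abel
  have := hφ _ (star_mul_self_nonneg (t • p + b))
  simpa only [hexp, map_add, map_smul, smul_eq_mul, h0, mul_zero, zero_add] using this

end Positive

end IsTwoSidedIdentity

namespace DirectedGraph.Path

variable {V E : Type*}

def ofEdge (G : DirectedGraph V E) (e : E) : G.Path :=
  ⟨G.r e, [e], List.IsChain.singleton _, by simp⟩

end DirectedGraph.Path

open DirectedGraph

@[simp] theorem cPath_ofEdge {V E : Type*} {G : DirectedGraph V E} (c : E → ℝ) (e : E) :
    cPath c (Path.ofEdge G e) = c e := by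
  simp [cPath, Path.ofEdge]

@[simp] theorem cPath_ofVertex {V E : Type*} {G : DirectedGraph V E} (c : E → ℝ) (v : V) :
    cPath c (Path.ofVertex G v) = 1 := by
  simp [cPath, Path.ofVertex]

namespace CKFamily

variable {V E B : Type*} {G : DirectedGraph V E}

section Algebraic

variable [NonUnitalRing B] [StarRing B] [PartialOrder B] (F : CKFamily G B)

@[simp] theorem sP_ofEdge (e : E) : F.sP (Path.ofEdge G e) = F.S e := rfl

@[simp] theorem sP_ofVertex (v : V) : F.sP (Path.ofVertex G v) = F.P v := rfl

theorem S_mul_P_source (e : E) : F.S e * F.P (G.s e) = F.S e := by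
  rw [← F.ck1, ← mul_assoc, F.S_partialIsometry]

theorem P_source_mul_star_S (e : E) : F.P (G.s e) * star (F.S e) = star (F.S e) := by
  simpa [F.P_sa] using congr_arg star (F.S_mul_P_source e)

theorem isStarProjection_S_mul_star (e : E) : IsStarProjection (F.S e * star (F.S e)) where
  isIdempotentElem := by rw [IsIdempotentElem, ← mul_assoc, F.S_partialIsometry]
  isSelfAdjoint := IsSelfAdjoint.mul_star_self _

end Algebraic

end CKFamily

theorem KMSCondition.apply_S_mul_star {V E B : Type*} {G : DirectedGraph V E}
    [NonUnitalNormedRing B] [StarRing B] [PartialOrder B] [NormedSpace ℂ B]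
    {F : CKFamily G B} {c : E → ℝ} {β : ℝ} {φ : B →L[ℂ] ℂ} (hKMS : KMSCondition F c β φ)
    (e : E) : φ (F.S e * star (F.S e)) = (c e ^ (-β) : ℝ) * φ (F.P (G.s e)) := by
  have h := hKMS (Path.ofEdge G e) (Path.ofVertex G (G.s e)) (Path.ofVertex G (G.s e))
    (Path.ofEdge G e) rfl rfl
  simp only [CKFamily.sP_ofEdge, CKFamily.sP_ofVertex, cPath_ofEdge, cPath_ofVertex,
    Real.one_rpow, mul_one, F.P_sa] at h
  rwa [F.S_mul_P_source, F.P_source_mul_star_S, F.ck1] at h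

theorem no_KMS_state_Oinfty_general {B : Type*} [NonUnitalNormedRing B]
    [StarRing B] [PartialOrder B] [StarOrderedRing B] [NormedSpace ℂ B]
    [IsScalarTower ℂ B B] [SMulCommClass ℂ B B] [StarModule ℂ B]
    (F : CKFamily cuntzInftyGraph B)
    (hunit : ∀ b : B, F.P () * b = b ∧ b * F.P () = b)
    (β : ℝ) :
    ¬ ∃ φ : B →L[ℂ] ℂ, IsStateOn φ ∧
      KMSCondition F (fun _ => Real.exp 1) β φ := by
  rintro ⟨φ, ⟨hnorm, hφ⟩, hKMS⟩
  have hp : IsTwoSidedIdentity (F.P ()) := hunit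
  have hrange (n : ℕ) : φ (F.S n * star (F.S n)) = Real.exp (-β) * φ (F.P ()) := by
    simpa [Real.exp_one_rpow] using hKMS.apply_S_mul_star n
  have hbound (N : ℕ) : (N : ℂ) * (Real.exp (-β) * φ (F.P ())) ≤ φ (F.P ()) := by
    have hq := IsStarProjection.sum (s := Finset.range N)
      (fun n _ => F.isStarProjection_S_mul_star n) fun m _ n _ hmn => F.range_orth m n hmn
    simpa [map_sum, hrange] using hp.apply_le_of_isStarProjection hφ hq
  have hφp : φ (F.P ()) = 0 := Complex.eq_zero_of_nonneg_of_forall_nat_mul_le (Real.exp_pos _)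
    (hφ _ hp.isStarProjection.nonneg) hbound
  have hφ0 : φ = 0 := ContinuousLinearMap.ext (hp.apply_eq_zero_of_apply_eq_zero hφ hφp)
  simp [hφ0] at hnorm

/-- for the gauge action (`c ≡ e`) on `O_∞` there is no
`(σᶜ, β)`-KMS state, for any `β > 0`. -/
theorem no_KMS_state_Oinfty {B : Type*} [NonUnitalNormedRing B]
    [StarRing B] [PartialOrder B] [StarOrderedRing B] [NormedSpace ℂ B]
    [IsScalarTower ℂ B B] [SMulCommClass ℂ B B] [StarModule ℂ B]
    [CStarRing B] [CompleteSpace B]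
    (F : CKFamily cuntzInftyGraph B)
    (hunit : ∀ b : B, F.P () * b = b ∧ b * F.P () = b)
    (β : ℝ) (hβ : 0 < β) :
    ¬ ∃ φ : B →L[ℂ] ℂ, IsStateOn φ ∧
      KMSCondition F (fun _ => Real.exp 1) β φ :=
  no_KMS_state_Oinfty_general F hunit β
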